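/- arXiv:2309.13808 — 2 statements merged into one kernel-verified Lean document; each statement's English description precedes it below -/
import Mathlib

section
/- (Jump optimization preserves the invariant) Extend the asynchronous muddy-children protocol with a jump transition for each child i: from a running state ⟨Obs, r, u⟩ with r < |Obs| − 1 and no input, child i moves to ⟨Obs, |Obs| − 1, u⟩ with no output. Then the invariant of Lemma Invariant Preservation still holds for every valid non-initial composite state σ of the extended protocol: for every component i with running state ⟨Obs_i, r_i, status_i⟩, letting N = |⋃_j Obs(σ_j)|: if status_i = u then r_i < |Obs_i| ≤ N; if status_i = m then r_i = N − 1 = |Obs_i|; if status_i = c then r_i = N = |Obs_i|. -/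
/-- Epistemic status of a child: unknown, muddy, or clean. -/
inductive Status : Type
  | u | m | c

/-- A message ⟨j, r, status⟩. -/
structure Msg (n : ℕ) : Type where
  sender : Fin n
  round : ℕ
  status : Status

/-- A child's state: initial ⟨Obs⟩ or running ⟨Obs, r, status⟩. -/
inductive ChildState (n : ℕ) : Type
  | start (Obs : Finset (Fin n))
  | run (Obs : Finset (Fin n)) (r : ℕ) (st : Status)

open Status ChildState

/-- Observation set of a child state. -/
def ChildState.obs {n : ℕ} : ChildState n → Finset (Fin n)
  | .start O => O
  | .run O _ _ => O

/-- A composite state. -/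
abbrev CState (n : ℕ) := Fin n → ChildState n

/-- The set M of muddy children determined by a composite state. -/
def muddySet {n : ℕ} (σ : CState n) : Finset (Fin n) :=
  Finset.univ.biUnion fun i => (σ i).obs

/-- consistent(σ): M nonempty and every child sees exactly M \ {i}. -/
def consistent {n : ℕ} (σ : CState n) : Prop :=
  (muddySet σ).Nonempty ∧ ∀ i, (σ i).obs = muddySet σ \ {i}

/-- The constrained local transitions of child `i` (labels init/emit/receive). -/
inductive LocalStep {n : ℕ} (i : Fin n) :
    ChildState n → Option (Msg n) → ChildState n → Option (Msg n) → Prop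
  | init_nonempty (O : Finset (Fin n)) (h : O ≠ ∅) :
      LocalStep i (start O) none (run O 0 u) none
  | init_empty (O : Finset (Fin n)) (h : O = ∅) :
      LocalStep i (start O) none (run O 0 m) none
  | emit (O : Finset (Fin n)) (r : ℕ) (s : Status) :
      LocalStep i (run O r s) none (run O r s) (some ⟨i, r, s⟩)
  | jump (O : Finset (Fin n)) (r : ℕ) (h : r < O.card - 1) :
      LocalStep i (run O r u) none (run O (O.card - 1) u) none
  | recv_decided (O : Finset (Fin n)) (r : ℕ) (s : Status) (mg : Msg n) (h : s ≠ u) :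
      LocalStep i (run O r s) (some mg) (run O r s) none
  | recv_c_eq (O : Finset (Fin n)) (r : ℕ) (j : Fin n) (r' : ℕ)
      (hj : j ∉ O) (hr : r' = O.card) :
      LocalStep i (run O r u) (some ⟨j, r', c⟩) (run O r' c) none
  | recv_c_succ (O : Finset (Fin n)) (r : ℕ) (j : Fin n) (r' : ℕ)
      (hj : j ∉ O) (hr : r' = O.card + 1) :
      LocalStep i (run O r u) (some ⟨j, r', c⟩) (run O (r' - 1) m) none
  | recv_m_eq (O : Finset (Fin n)) (r : ℕ) (j : Fin n) (r' : ℕ)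
      (hj : j ∈ O) (hr : r' = O.card) :
      LocalStep i (run O r u) (some ⟨j, r', m⟩) (run O r' m) none
  | recv_m_pred (O : Finset (Fin n)) (r : ℕ) (j : Fin n) (r' : ℕ)
      (hj : j ∈ O) (hr : r' = O.card - 1) :
      LocalStep i (run O r u) (some ⟨j, r', m⟩) (run O (r' + 1) c) none
  | recv_u_in_lt (O : Finset (Fin n)) (r : ℕ) (j : Fin n) (r' : ℕ)
      (hj : j ∈ O) (hr : r' < r) :
      LocalStep i (run O r u) (some ⟨j, r', u⟩) (run O r u) none
  | recv_u_in_mid (O : Finset (Fin n)) (r : ℕ) (j : Fin n) (r' : ℕ)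
      (hj : j ∈ O) (h1 : r ≤ r') (h2 : r' < O.card - 1) :
      LocalStep i (run O r u) (some ⟨j, r', u⟩) (run O (r' + 1) u) none
  | recv_u_in_top (O : Finset (Fin n)) (r : ℕ) (j : Fin n) (r' : ℕ)
      (hj : j ∈ O) (hr : r' = O.card - 1) :
      LocalStep i (run O r u) (some ⟨j, r', u⟩) (run O (r' + 1) m) none
  | recv_u_out_le (O : Finset (Fin n)) (r : ℕ) (j : Fin n) (r' : ℕ)
      (hj : j ∉ O) (hr : r' ≤ r) :
      LocalStep i (run O r u) (some ⟨j, r', u⟩) (run O r u) none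
  | recv_u_out_mid (O : Finset (Fin n)) (r : ℕ) (j : Fin n) (r' : ℕ)
      (hj : j ∉ O) (h1 : r < r') (h2 : r' < O.card) :
      LocalStep i (run O r u) (some ⟨j, r', u⟩) (run O r' u) none
  | recv_u_out_top (O : Finset (Fin n)) (r : ℕ) (j : Fin n) (r' : ℕ)
      (hj : j ∉ O) (hr : r' = O.card) :
      LocalStep i (run O r u) (some ⟨j, r', u⟩) (run O r' m) none

/-- The no-equivocation condition on an input message: the sender must be in a
running state matching the message (or a state strictly ahead of an unknown-status message). -/
def senderOK {n : ℕ} (σ : CState n) (mg : Msg n) : Prop :=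
  ∃ (O : Finset (Fin n)) (rj : ℕ) (sj : Status),
    σ mg.sender = run O rj sj ∧
      ((mg.status = sj ∧ mg.round = rj) ∨ (mg.status = u ∧ mg.round < rj))

/-- The composition constraint: init transitions require consistency of the
composite state, receives require the no-equivocation condition. -/
def stepConstraint {n : ℕ} (σ : CState n) (i : Fin n) (inp : Option (Msg n)) : Prop :=
  ((∃ O, σ i = start O) → consistent σ) ∧ ∀ mg, inp = some mg → senderOK σ mg

/-- Constrained transitions of the composite system: component `i` takes a local
transition, subject to the composition constraint. -/
inductive CStep {n : ℕ} :
    CState n → Fin n → Option (Msg n) → CState n → Option (Msg n) → Prop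
  | mk (σ : CState n) (i : Fin n) (inp : Option (Msg n)) (s' : ChildState n)
      (out : Option (Msg n))
      (hl : LocalStep i (σ i) inp s' out) (hc : stepConstraint σ i inp) :
      CStep σ i inp (Function.update σ i s') out

/-- A recorded transition: acting component, input message, output message. -/
abbrev Transition (n : ℕ) := Fin n × Option (Msg n) × Option (Msg n)

/-- A composite state is initial when all components are in initial states. -/
def isInitial {n : ℕ} (σ : CState n) : Prop := ∀ i, ∃ O, σ i = start O

/-- The trace `tr` emits the message `mg`. -/
def emits {n : ℕ} (tr : List (Transition n)) (mg : Msg n) : Prop :=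
  ∃ i inp, (i, inp, some mg) ∈ tr

/-- The message `mg` is an input of some transition of the trace `tr`. -/
def isInput {n : ℕ} (tr : List (Transition n)) (mg : Msg n) : Prop :=
  ∃ i out, (i, some mg, out) ∈ tr

/-- Constrained traces: sequences of constrained transitions from `σ0`. -/
inductive ConstrainedTrace {n : ℕ} (σ0 : CState n) :
    List (Transition n) → CState n → Prop
  | nil : ConstrainedTrace σ0 [] σ0
  | snoc (tr : List (Transition n)) (σ : CState n) (i : Fin n)
      (inp : Option (Msg n)) (σ' : CState n) (out : Option (Msg n))
      (htr : ConstrainedTrace σ0 tr σ)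
      (hstep : CStep σ i inp σ' out) :
      ConstrainedTrace σ0 (tr ++ [(i, inp, out)]) σ'

/-- Valid messages from the initial composite state `σ0`: messages emitted by a
constrained trace from `σ0` all of whose input messages are themselves valid,
i.e., emitted by valid traces from `σ0`. -/
inductive ValidMsg {n : ℕ} (σ0 : CState n) : Msg n → Prop
  | intro (mg : Msg n) (tr : List (Transition n)) (σ : CState n)
      (h0 : isInitial σ0)
      (hct : ConstrainedTrace σ0 tr σ)
      (hin : ∀ mg', isInput tr mg' → ValidMsg σ0 mg')
      (hem : emits tr mg) : ValidMsg σ0 mg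

/-- Valid traces from `σ0`: constrained traces from an initial composite state
in which every input message can be emitted by some valid trace from `σ0`. -/
def ValidTrace {n : ℕ} (σ0 : CState n) (tr : List (Transition n)) (σ : CState n) : Prop :=
  isInitial σ0 ∧ ConstrainedTrace σ0 tr σ ∧ ∀ mg, isInput tr mg → ValidMsg σ0 mg

/-- Status of a running child state. -/
def ChildState.status? {n : ℕ} : ChildState n → Option Status
  | .start _ => none
  | .run _ _ s => some s

/-- A composite state is final when every component knows its status. -/
def isFinal {n : ℕ} (σ : CState n) : Prop :=
  ∀ i, ∃ (O : Finset (Fin n)) (r : ℕ) (s : Status), σ i = run O r s ∧ s ≠ u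

/-- Round of a child state, with initial states at round -1. -/
def roundZ {n : ℕ} : ChildState n → ℤ
  | .start _ => -1
  | .run _ r _ => (r : ℤ)

section Aux

variable {n : ℕ}

/-- The invariant we maintain along constrained traces. -/
def MCInv (σ : CState n) : Prop :=
  ∀ i O r s, σ i = ChildState.run O r s →
    consistent σ ∧
    (s = Status.u → r < O.card ∧ O.card ≤ (muddySet σ).card) ∧
    (s = Status.m → r = (muddySet σ).card - 1 ∧ (muddySet σ).card - 1 = O.card) ∧
    (s = Status.c → r = (muddySet σ).card ∧ (muddySet σ).card = O.card)

lemma obs_localStep {i : Fin n} {s s' : ChildState n} {inp out}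
    (h : LocalStep i s inp s' out) : s'.obs = s.obs := by
  cases h <;> rfl

lemma muddySet_update {σ : CState n} {i : Fin n} {s' : ChildState n}
    (h : s'.obs = (σ i).obs) :
    muddySet (Function.update σ i s') = muddySet σ := by
  unfold muddySet
  refine Finset.biUnion_congr rfl fun k _ => ?_
  by_cases hk : k = i
  · subst hk; rw [Function.update_self, h]
  · rw [Function.update_of_ne hk]

lemma consistent_update {σ : CState n} {i : Fin n} {s' : ChildState n}
    (h : s'.obs = (σ i).obs) (hc : consistent σ) :
    consistent (Function.update σ i s') := by
  have hM := muddySet_update (σ := σ) (i := i) h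
  refine ⟨hM ▸ hc.1, fun k => ?_⟩
  rw [hM]
  by_cases hk : k = i
  · subst hk; rw [Function.update_self, h]; exact hc.2 _
  · rw [Function.update_of_ne hk]; exact hc.2 k

lemma card_sdiff_singleton (M : Finset (Fin n)) (k : Fin n) :
    (M \ {k}).card = if k ∈ M then M.card - 1 else M.card := by
  rw [← Finset.erase_eq]
  by_cases h : k ∈ M
  · simp [h, Finset.card_erase_of_mem]
  · simp [h, Finset.erase_eq_of_notMem]

lemma sender_bound {σ : CState n} (hI : MCInv σ) (hc : consistent σ)
    {j : Fin n} {r' : ℕ} {st : Status}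
    (hok : senderOK σ ⟨j, r', st⟩) :
    (st = Status.c → r' = (muddySet σ).card ∧ j ∉ muddySet σ) ∧
    (st = Status.m → r' = (muddySet σ).card - 1 ∧ j ∈ muddySet σ) ∧
    (st = Status.u →
      (j ∈ muddySet σ → r' < (muddySet σ).card - 1) ∧
      (j ∉ muddySet σ → r' < (muddySet σ).card)) := by
  obtain ⟨Oj, rj, sj, hj0, hd0⟩ := hok
  have hj : σ j = run Oj rj sj := hj0
  have hd : (st = sj ∧ r' = rj) ∨ (st = Status.u ∧ r' < rj) := hd0
  have hN1 : 1 ≤ (muddySet σ).card := Finset.card_pos.mpr hc.1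
  have hOj : Oj = muddySet σ \ {j} := by
    have h2 := hc.2 j
    rw [hj] at h2
    exact h2
  have hcard : Oj.card =
      if j ∈ muddySet σ then (muddySet σ).card - 1 else (muddySet σ).card := by
    rw [hOj]; exact card_sdiff_singleton _ _
  have hIj := hI j Oj rj sj hj
  refine ⟨?_, ?_, ?_⟩
  · intro hst
    rcases hd with ⟨h1, h2⟩ | ⟨h1, h2⟩
    · rw [hst] at h1
      have hb := hIj.2.2.2 h1.symm
      by_cases hm : j ∈ muddySet σ
      · rw [if_pos hm] at hcard; omega
      · rw [if_neg hm] at hcard; exact ⟨by omega, hm⟩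
    · rw [hst] at h1; exact Status.noConfusion h1
  · intro hst
    rcases hd with ⟨h1, h2⟩ | ⟨h1, h2⟩
    · rw [hst] at h1
      have hb := hIj.2.2.1 h1.symm
      by_cases hm : j ∈ muddySet σ
      · rw [if_pos hm] at hcard; exact ⟨by omega, hm⟩
      · rw [if_neg hm] at hcard; omega
    · rw [hst] at h1; exact Status.noConfusion h1
  · intro hst
    rcases hd with ⟨h1, h2⟩ | ⟨h1, h2⟩
    · rw [hst] at h1
      have hb := hIj.2.1 h1.symm
      by_cases hm : j ∈ muddySet σ
      · rw [if_pos hm] at hcard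
        exact ⟨fun _ => by omega, fun h => absurd hm h⟩
      · rw [if_neg hm] at hcard
        exact ⟨fun h => absurd h hm, fun _ => by omega⟩
    · cases sj with
      | u =>
        have hb := hIj.2.1 rfl
        by_cases hm : j ∈ muddySet σ
        · rw [if_pos hm] at hcard
          exact ⟨fun _ => by omega, fun h => absurd hm h⟩
        · rw [if_neg hm] at hcard
          exact ⟨fun h => absurd h hm, fun _ => by omega⟩
      | m =>
        have hb := hIj.2.2.1 rfl
        by_cases hm : j ∈ muddySet σ
        · rw [if_pos hm] at hcard
          exact ⟨fun _ => by omega, fun h => absurd hm h⟩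
        · rw [if_neg hm] at hcard; omega
      | c =>
        have hb := hIj.2.2.2 rfl
        by_cases hm : j ∈ muddySet σ
        · rw [if_pos hm] at hcard; omega
        · rw [if_neg hm] at hcard
          exact ⟨fun h => absurd h hm, fun _ => by omega⟩

lemma mk_u {P A B C : Prop} (hP : P) (hA : A) :
    P ∧ (Status.u = Status.u → A) ∧ (Status.u = Status.m → B) ∧ (Status.u = Status.c → C) :=
  ⟨hP, fun _ => hA, fun h => Status.noConfusion h, fun h => Status.noConfusion h⟩

lemma mk_m {P A B C : Prop} (hP : P) (hB : B) :
    P ∧ (Status.m = Status.u → A) ∧ (Status.m = Status.m → B) ∧ (Status.m = Status.c → C) :=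
  ⟨hP, fun h => Status.noConfusion h, fun _ => hB, fun h => Status.noConfusion h⟩

lemma mk_c {P A B C : Prop} (hP : P) (hC : C) :
    P ∧ (Status.c = Status.u → A) ∧ (Status.c = Status.m → B) ∧ (Status.c = Status.c → C) :=
  ⟨hP, fun h => Status.noConfusion h, fun h => Status.noConfusion h, fun _ => hC⟩

lemma inv_step {σ σ' : CState n} {i : Fin n} {inp : Option (Msg n)} {out : Option (Msg n)}
    (hs : CStep σ i inp σ' out) (hI : MCInv σ) : MCInv σ' := by
  cases hs with
  | mk s' _ hl hcstr =>
    have hobs : s'.obs = (σ i).obs := obs_localStep hl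
    have hM : muddySet (Function.update σ i s') = muddySet σ := muddySet_update hobs
    intro k O r s hk
    by_cases hki : k = i
    case neg =>
      rw [Function.update_of_ne hki] at hk
      have h := hI k O r s hk
      rw [hM]
      exact ⟨consistent_update hobs h.1, h.2⟩
    case pos =>
      subst hki
      rw [Function.update_self] at hk
      subst hk
      rw [hM]
      generalize hq : σ k = sk at hl
      cases hl with
      | init_nonempty O hO =>
        have hcons : consistent σ := hcstr.1 ⟨O, hq⟩
        have hN1 : 1 ≤ (muddySet σ).card := Finset.card_pos.mpr hcons.1
        have hOk : O = muddySet σ \ {k} := by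
          have h2 := hcons.2 k; rw [hq] at h2; exact h2
        have hcard : O.card =
            if k ∈ muddySet σ then (muddySet σ).card - 1 else (muddySet σ).card := by
          rw [hOk]; exact card_sdiff_singleton _ _
        have hOpos : 0 < O.card := Finset.card_pos.mpr (Finset.nonempty_iff_ne_empty.mpr hO)
        refine mk_u (consistent_update hobs hcons) ?_
        constructor
        · exact hOpos
        · by_cases hm : k ∈ muddySet σ <;> simp only [hm, if_true, if_false] at hcard <;> omega
      | init_empty O hO =>
        have hcons : consistent σ := hcstr.1 ⟨O, hq⟩
        have hN1 : 1 ≤ (muddySet σ).card := Finset.card_pos.mpr hcons.1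
        have hOk : O = muddySet σ \ {k} := by
          have h2 := hcons.2 k; rw [hq] at h2; exact h2
        refine mk_m (consistent_update hobs hcons) ?_
        have hsub : muddySet σ ⊆ {k} := by
          intro x hx
          by_contra hxk
          have hxin : x ∈ muddySet σ \ {k} := Finset.mem_sdiff.mpr ⟨hx, by simpa using hxk⟩
          rw [← hOk, hO] at hxin
          exact absurd hxin (Finset.notMem_empty x)
        have hMeq : muddySet σ = {k} := by
          apply Finset.Subset.antisymm hsub
          intro x hx
          rcases hcons.1 with ⟨y, hy⟩
          have hyk := hsub hy
          rw [Finset.mem_singleton] at hx hyk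
          rwa [hx, ← hyk]
        rw [hMeq, hO]
        simp
      | emit Opre rpre spre =>
        exact ⟨consistent_update hobs (hI k _ _ _ hq).1, (hI k _ _ _ hq).2⟩
      | jump Opre rpre hlt =>
        have hIk := hI k _ _ _ hq
        refine mk_u (consistent_update hobs hIk.1) ?_
        have hb := hIk.2.1 rfl
        omega
      | recv_decided Opre rpre spre mg hne =>
        exact ⟨consistent_update hobs (hI k _ _ _ hq).1, (hI k _ _ _ hq).2⟩
      | recv_c_eq Opre rpre j r' hj hr =>
        have hIk := hI k _ _ _ hq
        have hcons := hIk.1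
        obtain ⟨h1, h2⟩ := (sender_bound hI hcons (hcstr.2 _ rfl)).1 rfl
        exact mk_c (consistent_update hobs hcons) (by omega)
      | recv_c_succ Opre rpre j r' hj hr =>
        have hIk := hI k _ _ _ hq
        have hcons := hIk.1
        obtain ⟨h1, h2⟩ := (sender_bound hI hcons (hcstr.2 _ rfl)).1 rfl
        exact mk_m (consistent_update hobs hcons) (by omega)
      | recv_m_eq Opre rpre j r' hj hr =>
        have hIk := hI k _ _ _ hq
        have hcons := hIk.1
        obtain ⟨h1, h2⟩ := (sender_bound hI hcons (hcstr.2 _ rfl)).2.1 rfl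
        exact mk_m (consistent_update hobs hcons) (by omega)
      | recv_m_pred Opre rpre j r' hj hr =>
        have hIk := hI k _ _ _ hq
        have hcons := hIk.1
        have hN1 : 1 ≤ (muddySet σ).card := Finset.card_pos.mpr hcons.1
        obtain ⟨h1, h2⟩ := (sender_bound hI hcons (hcstr.2 _ rfl)).2.1 rfl
        have hOpos : 0 < O.card := Finset.card_pos.mpr ⟨j, hj⟩
        exact mk_c (consistent_update hobs hcons) (by omega)
      | recv_u_in_lt Opre rpre j r' hj hr =>
        exact ⟨consistent_update hobs (hI k _ _ _ hq).1, (hI k _ _ _ hq).2⟩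
      | recv_u_in_mid Opre rpre j r' hj h1 h2 =>
        have hIk := hI k _ _ _ hq
        refine mk_u (consistent_update hobs hIk.1) ?_
        have hb := hIk.2.1 rfl
        omega
      | recv_u_in_top Opre rpre j r' hj hr =>
        have hIk := hI k _ _ _ hq
        have hcons := hIk.1
        have hb := hIk.2.1 rfl
        have hsb := (sender_bound hI hcons (hcstr.2 _ rfl)).2.2 rfl
        have hOk : O = muddySet σ \ {k} := by
          have h2 := hcons.2 k; rw [hq] at h2; exact h2
        have hjM : j ∈ muddySet σ := by
          have hj2 := hj; rw [hOk] at hj2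
          exact (Finset.mem_sdiff.mp hj2).1
        have hlt : r' < (muddySet σ).card - 1 := hsb.1 hjM
        have hOpos : 0 < O.card := Finset.card_pos.mpr ⟨j, hj⟩
        have hcard : O.card =
            if k ∈ muddySet σ then (muddySet σ).card - 1 else (muddySet σ).card := by
          rw [hOk]; exact card_sdiff_singleton _ _
        refine mk_m (consistent_update hobs hcons) ?_
        by_cases hm : k ∈ muddySet σ <;> simp only [hm, if_true, if_false] at hcard <;> omega
      | recv_u_out_le Opre rpre j r' hj hr =>
        exact ⟨consistent_update hobs (hI k _ _ _ hq).1, (hI k _ _ _ hq).2⟩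
      | recv_u_out_mid Opre rpre j r' hj h1 h2 =>
        have hIk := hI k _ _ _ hq
        refine mk_u (consistent_update hobs hIk.1) ?_
        have hb := hIk.2.1 rfl
        omega
      | recv_u_out_top Opre rpre j r' hj hr =>
        have hIk := hI k _ _ _ hq
        have hcons := hIk.1
        have hb := hIk.2.1 rfl
        have hN1 : 1 ≤ (muddySet σ).card := Finset.card_pos.mpr hcons.1
        have hsb := (sender_bound hI hcons (hcstr.2 _ rfl)).2.2 rfl
        have hOk : O = muddySet σ \ {k} := by
          have h2 := hcons.2 k; rw [hq] at h2; exact h2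
        have hcard : O.card =
            if k ∈ muddySet σ then (muddySet σ).card - 1 else (muddySet σ).card := by
          rw [hOk]; exact card_sdiff_singleton _ _
        refine mk_m (consistent_update hobs hcons) ?_
        by_cases hjM : j ∈ muddySet σ
        · have hlt := hsb.1 hjM
          by_cases hm : k ∈ muddySet σ <;> simp only [hm, if_true, if_false] at hcard <;> omega
        · have hlt := hsb.2 hjM
          by_cases hm : k ∈ muddySet σ <;> simp only [hm, if_true, if_false] at hcard <;> omega

lemma inv_trace {σ0 σ : CState n} {tr : List (Transition n)} (h0 : isInitial σ0)
    (htr : ConstrainedTrace σ0 tr σ) : MCInv σ := by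
  induction htr with
  | nil =>
    intro i O r s h
    obtain ⟨O0, hO0⟩ := h0 i
    rw [hO0] at h
    exact nomatch h
  | snoc tr σ i inp σ' out htr hstep ih => exact inv_step hstep ih

end Aux

/-- Jump optimization preserves the invariant: in the protocol extended with
the jump transition, every valid non-initial composite state still satisfies
the invariant of Lemma Invariant Preservation. -/
theorem muddy_jump_invariant_preservation (n : ℕ) (hn : 1 ≤ n)
    (σ0 σ : CState n) (tr : List (Transition n))
    (htr : ValidTrace σ0 tr σ) (hni : ¬ isInitial σ)
    (N : ℕ) (hN : N = (muddySet σ).card) :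
    ∀ (i : Fin n) (O : Finset (Fin n)) (r : ℕ) (s : Status),
      σ i = ChildState.run O r s →
        (s = Status.u → r < O.card ∧ O.card ≤ N) ∧
        (s = Status.m → r = N - 1 ∧ N - 1 = O.card) ∧
        (s = Status.c → r = N ∧ N = O.card) := by
  intro i O r s hi
  obtain ⟨h0, hct, -⟩ := htr
  have hI := inv_trace h0 hct
  have h := hI i O r s hi
  subst hN
  exact h.2
end

section
/- (Short path after jumps) In the asynchronous muddy-children protocol extended with the jump transition (from ⟨Obs, r, u⟩ with r < |Obs| − 1 to ⟨Obs, |Obs| − 1, u⟩, no input, no output), from any consistent initial composite state with at least two muddy children there exists a valid trace reaching a final composite state (every child's status matches the instance) whose length is at most 4n + 3, obtained by: all children init and jump, one muddy child emits an unknown-status message at round |Obs| − 1, another muddy child receives it, discovers they are muddy and emits a muddy-status message, and all remaining children receive that message and discover their status. -/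
open Status ChildState

/-!
With the jump transition every child moves straight to round `|Obs| - 1` without
communicating. A muddy child `a` then announces that it is still ignorant at round `N - 2`.
Another muddy child `b` sees `a` and `N - 2` further muddy children; `a`'s ignorance at
round `|Obs_b| - 1` tells `b` that it is muddy itself. `b` broadcasts this at round `N - 1`,
and every other child decides: a muddy one sees `N - 1` muddy children, so `b`'s round
equals `|Obs|` and it is muddy; a clean one sees `N`, so the round is `|Obs| - 1` and it
is clean.
-/

section Traces

variable {n : ℕ}

theorem LocalStep.obs_eq {i : Fin n} {s s' : ChildState n} {inp out : Option (Msg n)}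
    (h : LocalStep i s inp s' out) : s'.obs = s.obs := by
  cases h <;> rfl

theorem CStep.obs_eq {σ σ' : CState n} {i : Fin n} {inp out : Option (Msg n)}
    (h : CStep σ i inp σ' out) (j : Fin n) : (σ' j).obs = (σ j).obs := by
  cases h with
  | mk _ _ hl _ =>
    rcases eq_or_ne j i with rfl | hj
    · simpa using hl.obs_eq
    · rw [Function.update_of_ne hj]

theorem ConstrainedTrace.obs_eq {σ0 σ : CState n} {tr : List (Transition n)}
    (h : ConstrainedTrace σ0 tr σ) (j : Fin n) : (σ j).obs = (σ0 j).obs := by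
  induction h with
  | nil => rfl
  | snoc _ _ _ _ _ _ _ hstep ih => exact (hstep.obs_eq j).trans ih

theorem consistent_of_obs_eq {σ σ' : CState n} (h : ∀ j, (σ' j).obs = (σ j).obs)
    (hc : consistent σ) : consistent σ' := by
  have hM : muddySet σ' = muddySet σ := Finset.biUnion_congr rfl fun j _ => h j
  exact ⟨hM ▸ hc.1, fun i => by rw [hM, h i, hc.2 i]⟩

theorem ConstrainedTrace.consistent {σ0 σ : CState n} {tr : List (Transition n)}
    (h : ConstrainedTrace σ0 tr σ) (hc : consistent σ0) : consistent σ :=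
  consistent_of_obs_eq h.obs_eq hc

theorem ConstrainedTrace.append {σ0 σ1 σ2 : CState n} {tr1 tr2 : List (Transition n)}
    (h1 : ConstrainedTrace σ0 tr1 σ1) (h2 : ConstrainedTrace σ1 tr2 σ2) :
    ConstrainedTrace σ0 (tr1 ++ tr2) σ2 := by
  induction h2 with
  | nil => simpa using h1
  | snoc _ _ _ _ _ _ _ hstep ih =>
    rw [← List.append_assoc]
    exact .snoc _ _ _ _ _ _ ih hstep

def batch (L : List (Fin n)) (inp out : Option (Msg n)) : List (Transition n) :=
  L.map fun i => (i, inp, out)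

theorem constrainedTrace_batch {σ σ' : CState n} {L : List (Fin n)} {inp out : Option (Msg n)}
    (hc : consistent σ) (hL : L.Nodup)
    (hstep : ∀ i ∈ L, LocalStep i (σ i) inp (σ' i) out)
    (hstay : ∀ i ∉ L, σ' i = σ i)
    (hsend : ∀ mg, inp = some mg → mg.sender ∉ L ∧ senderOK σ mg) :
    ConstrainedTrace σ (batch L inp out) σ' := by
  induction L generalizing σ with
  | nil =>
    rw [show σ' = σ from funext fun i => hstay i List.not_mem_nil]
    exact .nil
  | cons k L ih =>
    obtain ⟨hkL, hL⟩ := List.nodup_cons.1 hL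
    set σ1 := Function.update σ k (σ' k)
    have hk : CStep σ k inp σ1 out :=
      .mk σ k inp _ out (hstep k List.mem_cons_self) ⟨fun _ => hc, fun mg h => (hsend mg h).2⟩
    have hσ1 : ∀ i ≠ k, σ1 i = σ i := fun i hi => Function.update_of_ne hi _ _
    have hrest : ConstrainedTrace σ1 (batch L inp out) σ' := by
      refine ih (consistent_of_obs_eq hk.obs_eq hc) hL (fun i hi => ?_) (fun i hi => ?_) ?_
      · rw [hσ1 i (by rintro rfl; exact hkL hi)]
        exact hstep i (List.mem_cons_of_mem _ hi)
      · rcases eq_or_ne i k with rfl | hik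
        · exact (Function.update_self i (σ' i) σ).symm
        · rw [hσ1 i hik]
          exact hstay i (by simp [hi, hik])
      · intro mg hmg
        obtain ⟨hs, O, r, s, hO, hr⟩ := hsend mg hmg
        have hsk : mg.sender ≠ k := fun h => hs (h ▸ List.mem_cons_self)
        exact ⟨fun h => hs (List.mem_cons_of_mem _ h), O, r, s, by rw [hσ1 _ hsk, hO], hr⟩
    simpa [batch] using (ConstrainedTrace.snoc [] σ k inp σ1 out .nil hk).append hrest

theorem isInput_append {tr tr' : List (Transition n)} {mg : Msg n} :
    isInput (tr ++ tr') mg ↔ isInput tr mg ∨ isInput tr' mg := by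
  simp only [isInput, List.mem_append, exists_or]

theorem eq_of_isInput_batch {L : List (Fin n)} {inp out : Option (Msg n)} {mg : Msg n}
    (h : isInput (batch L inp out) mg) : inp = some mg := by
  obtain ⟨_, _, h⟩ := h
  simp only [batch, List.mem_map, Prod.mk.injEq] at h
  obtain ⟨_, _, _, h, _⟩ := h
  exact h

theorem ValidTrace.nil {σ0 : CState n} (h0 : isInitial σ0) : ValidTrace σ0 [] σ0 :=
  ⟨h0, .nil, fun _ ⟨_, _, h⟩ => by simp at h⟩

theorem ValidTrace.append_batch {σ0 σ σ' : CState n} {tr : List (Transition n)}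
    {L : List (Fin n)} {inp out : Option (Msg n)} (hv : ValidTrace σ0 tr σ)
    (hb : ConstrainedTrace σ (batch L inp out) σ')
    (hinp : ∀ mg, inp = some mg → ValidMsg σ0 mg) :
    ValidTrace σ0 (tr ++ batch L inp out) σ' :=
  ⟨hv.1, hv.2.1.append hb, fun mg h =>
    (isInput_append.1 h).elim (hv.2.2 mg) fun h => hinp mg (eq_of_isInput_batch h)⟩

theorem ValidTrace.consistent {σ0 σ : CState n} {tr : List (Transition n)}
    (hv : ValidTrace σ0 tr σ) (hc : consistent σ0) : consistent σ :=
  hv.2.1.consistent hc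

theorem ValidTrace.validMsg {σ0 σ : CState n} {tr : List (Transition n)} {i : Fin n}
    {inp : Option (Msg n)} {mg : Msg n} (hv : ValidTrace σ0 tr σ) (h : (i, inp, some mg) ∈ tr) :
    ValidMsg σ0 mg :=
  .intro mg tr σ hv.1 hv.2.1 hv.2.2 ⟨i, inp, h⟩

end Traces

section Protocol

variable {n : ℕ}

theorem card_sdiff_singleton_of_mem {α : Type*} [DecidableEq α] {s : Finset α} {a : α}
    (h : a ∈ s) : (s \ {a}).card = s.card - 1 := by
  rw [Finset.sdiff_singleton_eq_erase, Finset.card_erase_of_mem h]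

theorem card_sdiff_singleton_of_notMem {α : Type*} [DecidableEq α] {s : Finset α} {a : α}
    (h : a ∉ s) : (s \ {a}).card = s.card := by
  rw [Finset.sdiff_singleton_eq_erase, Finset.erase_eq_of_notMem h]

theorem eq_start_of_consistent {σ : CState n} (h0 : isInitial σ) (hc : consistent σ)
    (i : Fin n) : σ i = start (muddySet σ \ {i}) := by
  obtain ⟨O, hO⟩ := h0 i
  have hobs := hc.2 i
  rw [hO] at hobs ⊢
  exact congrArg start hobs

def allInit (M : Finset (Fin n)) : CState n := fun i => run (M \ {i}) 0 u

def allJumped (M : Finset (Fin n)) : CState n := fun i => run (M \ {i}) ((M \ {i}).card - 1) u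

def allSolved (M : Finset (Fin n)) : CState n := fun i =>
  if i ∈ M then run (M \ {i}) (M.card - 1) m else run (M \ {i}) M.card c

theorem exists_validTrace_allJumped {σ0 : CState n} (h0 : isInitial σ0) (hc : consistent σ0)
    (h2 : 2 ≤ (muddySet σ0).card) :
    ∃ tr, ValidTrace σ0 tr (allJumped (muddySet σ0)) ∧ tr.length ≤ 2 * n := by
  set M := muddySet σ0
  have hinit : ConstrainedTrace σ0 (batch (List.finRange n) none none) (allInit M) := by
    refine constrainedTrace_batch hc (List.nodup_finRange n) (fun i _ => ?_)
      (fun i hi => absurd (List.mem_finRange i) hi) (by simp)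
    have hpos : 0 < (M \ {i}).card := by
      have := Finset.le_card_sdiff {i} M
      rw [Finset.card_singleton] at this
      omega
    rw [eq_start_of_consistent h0 hc i]
    exact .init_nonempty _ (Finset.card_pos.1 hpos).ne_empty
  set L := (List.finRange n).filter fun i => 0 < (M \ {i}).card - 1
  have hjump : ConstrainedTrace (allInit M) (batch L none none) (allJumped M) := by
    refine constrainedTrace_batch (hinit.consistent hc) ((List.nodup_finRange n).filter _)
      (fun i hi => .jump _ 0 (by simp [L] at hi; omega)) (fun i hi => ?_) (by simp)
    have hr : (M \ {i}).card - 1 = 0 := by simp [L] at hi; omega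
    simp only [allJumped, allInit, hr]
  refine ⟨[] ++ batch _ none none ++ batch L none none,
    ((ValidTrace.nil h0).append_batch hinit (by simp)).append_batch hjump (by simp), ?_⟩
  have hL : L.length ≤ n := (List.length_filter_le _ _).trans_eq (List.length_finRange)
  simp only [batch, List.nil_append, List.length_append, List.length_map, List.length_finRange]
  omega

theorem exists_validTrace_announce {σ0 : CState n} {tr : List (Transition n)}
    (hc : consistent σ0) (h2 : 2 ≤ (muddySet σ0).card)
    (hv : ValidTrace σ0 tr (allJumped (muddySet σ0))) :
    ∃ b ∈ muddySet σ0, ∃ tr', tr'.length = 3 ∧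
      ValidTrace σ0 (tr ++ tr')
        (Function.update (allJumped (muddySet σ0)) b (allSolved (muddySet σ0) b)) ∧
      ValidMsg σ0 ⟨b, (muddySet σ0).card - 1, m⟩ := by
  set M := muddySet σ0
  obtain ⟨a, ha, b, hb, hab⟩ := Finset.one_lt_card.1 (by omega : 1 < M.card)
  set mg1 : Msg n := ⟨a, (M \ {a}).card - 1, u⟩
  set mg2 : Msg n := ⟨b, M.card - 1, m⟩
  set σB := allJumped M
  set σC := Function.update σB b (allSolved M b)
  have hσCb : σC b = run (M \ {b}) (M.card - 1) m := by simp [σC, allSolved, hb]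
  have hemit : ConstrainedTrace σB (batch [a] none (some mg1)) σB :=
    constrainedTrace_batch (hv.consistent hc) (List.nodup_singleton a)
      (fun i hi => by obtain rfl := List.eq_of_mem_singleton hi; exact .emit _ _ _)
      (fun _ _ => rfl) (by simp)
  have hv1 := hv.append_batch hemit (by simp)
  have hrecv : ConstrainedTrace σB (batch [b] (some mg1) none) σC := by
    refine constrainedTrace_batch (hv1.consistent hc) (List.nodup_singleton b)
      (fun i hi => ?_) (fun i hi => Function.update_of_ne (by simpa using hi) _ _) ?_
    · obtain rfl := List.eq_of_mem_singleton hi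
      have haO : a ∈ M \ {i} := by simp [ha, hab]
      have hround : M.card - 1 = (M \ {a}).card - 1 + 1 := by
        rw [card_sdiff_singleton_of_mem ha]
        omega
      rw [hσCb, hround]
      exact .recv_u_in_top _ _ a _ haO
        (by rw [card_sdiff_singleton_of_mem ha, card_sdiff_singleton_of_mem hb])
    · rintro _ ⟨⟩
      exact ⟨by simpa using hab, _, _, _, rfl, .inl ⟨rfl, rfl⟩⟩
  have hv2 := hv1.append_batch hrecv fun _ h =>
    Option.some_inj.1 h ▸ hv1.validMsg (List.mem_append_right tr (List.mem_singleton_self _))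
  have hannounce : ConstrainedTrace σC (batch [b] none (some mg2)) σC :=
    constrainedTrace_batch (hv2.consistent hc) (List.nodup_singleton b)
      (fun i hi => by obtain rfl := List.eq_of_mem_singleton hi; rw [hσCb]; exact .emit _ _ _)
      (fun _ _ => rfl) (by simp)
  have hv3 := hv2.append_batch hannounce (by simp)
  exact ⟨b, hb, _, rfl, by simpa only [List.append_assoc] using hv3,
    hv3.validMsg (List.mem_append_right _ (List.mem_singleton_self _))⟩

theorem validTrace_allSolved {σ0 : CState n} {tr : List (Transition n)} {b : Fin n}
    (hc : consistent σ0) (h2 : 2 ≤ (muddySet σ0).card) (hb : b ∈ muddySet σ0)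
    (hv : ValidTrace σ0 tr
      (Function.update (allJumped (muddySet σ0)) b (allSolved (muddySet σ0) b)))
    (hmg : ValidMsg σ0 ⟨b, (muddySet σ0).card - 1, m⟩) :
    ValidTrace σ0
      (tr ++ batch ((List.finRange n).filter (· ≠ b))
        (some ⟨b, (muddySet σ0).card - 1, m⟩) none)
      (allSolved (muddySet σ0)) := by
  set M := muddySet σ0
  have hσb : allSolved M b = run (M \ {b}) (M.card - 1) m := by simp [allSolved, hb]
  refine hv.append_batch (constrainedTrace_batch (hv.consistent hc)
    ((List.nodup_finRange n).filter fun i => decide (i ≠ b)) (fun i hi => ?_) (fun i hi => ?_) ?_)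
    fun _ h => Option.some_inj.1 h ▸ hmg
  · have hib : i ≠ b := by simpa using hi
    have hbO : b ∈ M \ {i} := by simp [hb, hib.symm]
    rw [Function.update_of_ne hib]
    by_cases hiM : i ∈ M
    · simp only [allJumped, allSolved, if_pos hiM]
      exact .recv_m_eq _ _ b _ hbO (card_sdiff_singleton_of_mem hiM).symm
    · have hcard := card_sdiff_singleton_of_notMem hiM
      simp only [allJumped, allSolved, if_neg hiM]
      convert LocalStep.recv_m_pred _ _ b _ hbO (by rw [hcard]) using 2
      omega
  · obtain rfl : i = b := by simpa using hi
    simp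
  · rintro _ ⟨⟩
    exact ⟨by simp, _, _, _, by rw [Function.update_self, hσb], .inl ⟨rfl, rfl⟩⟩

end Protocol

theorem muddy_jump_short_path_general (n : ℕ)
    (σ0 : CState n) (h0 : isInitial σ0) (hc : consistent σ0)
    (h2 : 2 ≤ (muddySet σ0).card) :
    ∃ (tr : List (Transition n)) (σ : CState n),
      ValidTrace σ0 tr σ ∧ tr.length ≤ 4 * n + 3 ∧
      ∀ i : Fin n, ∃ (O : Finset (Fin n)) (r : ℕ),
        σ i = ChildState.run O r
          (if i ∈ muddySet σ0 then Status.m else Status.c) := by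
  obtain ⟨tr₁, hv₁, hlen₁⟩ := exists_validTrace_allJumped h0 hc h2
  obtain ⟨b, hb, tr₂, hlen₂, hv₂, hmg⟩ := exists_validTrace_announce hc h2 hv₁
  refine ⟨_, _, validTrace_allSolved hc h2 hb hv₂ hmg, ?_, fun i => ?_⟩
  · have hL : ((List.finRange n).filter (· ≠ b)).length ≤ n :=
      (List.length_filter_le _ _).trans_eq List.length_finRange
    simp only [batch, List.length_append, List.length_map, hlen₂]
    omega
  · unfold allSolved
    split <;> exact ⟨_, _, rfl⟩

/-- Short path after jumps: in the protocol extended with the jump transition,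
from any consistent initial composite state with at least two muddy children
there is a valid trace of length at most 4n + 3 reaching a final composite
state in which every child's status matches the instance of the problem. -/
theorem muddy_jump_short_path (n : ℕ) (hn : 1 ≤ n)
    (σ0 : CState n) (h0 : isInitial σ0) (hc : consistent σ0)
    (h2 : 2 ≤ (muddySet σ0).card) :
    ∃ (tr : List (Transition n)) (σ : CState n),
      ValidTrace σ0 tr σ ∧ tr.length ≤ 4 * n + 3 ∧
      ∀ i : Fin n, ∃ (O : Finset (Fin n)) (r : ℕ),
        σ i = ChildState.run O r
          (if i ∈ muddySet σ0 then Status.m else Status.c) :=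
  muddy_jump_short_path_general n σ0 h0 hc h2
end
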